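/- Paillier decryption correctness for g = 1+n: if gcd(m·λ, n) behaves as required, then L((1+n)^{mλ} mod n²)·μ ≡ m (mod n), where L(x) = (x-1)/n and μ = (L((1+n)^λ mod n²))⁻¹ mod n = λ⁻¹ mod n. -/

import Mathlib

/-! Modulo `n²` the binomial expansion of `(1 + n)^k` stops after the linear term, so
`(1 + n)^k mod n² = 1 + n (k mod n)` and Paillier's `L` recovers `k mod n`. For `k = m λ`,
multiplying by `λ⁻¹` in `ZMod n` leaves `m`. -/

theorem Nat.one_add_pow_modEq_sq (n k : ℕ) : (1 + n) ^ k ≡ 1 + n * k [MOD n ^ 2] := by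
  rw [← Int.natCast_modEq_iff]
  have h := sq_dvd_add_pow_sub_sub (n : ℤ) 1 k
  simp only [one_pow, one_mul] at h
  refine (Int.modEq_iff_dvd.mpr ?_).symm
  push_cast
  rwa [sub_add_eq_sub_sub_swap]

theorem Nat.one_add_pow_mod_sq {n : ℕ} (hn : 2 ≤ n) (k : ℕ) :
    (1 + n) ^ k % n ^ 2 = 1 + n * (k % n) := by
  have hreduce : 1 + n * k ≡ 1 + n * (k % n) [MOD n ^ 2] := by
    rw [sq]
    exact ((Nat.mod_modEq k n).symm.mul_left' n).add_left 1
  have hlt : 1 + n * (k % n) < n ^ 2 := by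
    have : k % n + 1 ≤ n := Nat.mod_lt k (by omega)
    nlinarith
  rw [(Nat.one_add_pow_modEq_sq n k).trans hreduce, Nat.mod_eq_of_lt hlt]

theorem Nat.one_add_pow_mod_sq_sub_one_div {n : ℕ} (hn : 2 ≤ n) (k : ℕ) :
    ((1 + n) ^ k % n ^ 2 - 1) / n = k % n := by
  rw [Nat.one_add_pow_mod_sq hn, Nat.add_sub_cancel_left, Nat.mul_div_cancel_left _ (by omega)]

theorem paillier_decryption_correct_general (n lam m : ℕ) (hn : 2 ≤ n)
    (hco : Nat.Coprime lam n) :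
    ((((1 + n) ^ (m * lam) % n ^ 2 - 1) / n : ℕ) : ZMod n) * (lam : ZMod n)⁻¹
      = (m : ZMod n) := by
  rw [Nat.one_add_pow_mod_sq_sub_one_div hn, ZMod.natCast_mod, Nat.cast_mul, mul_assoc,
    ZMod.coe_mul_inv_eq_one lam hco, mul_one]

theorem paillier_decryption_correct (n lam m : ℕ) (hn : 2 ≤ n)
    (hco : Nat.Coprime lam n) (hm : m < n) :
    ((((1 + n) ^ (m * lam) % n ^ 2 - 1) / n : ℕ) : ZMod n) * (lam : ZMod n)⁻¹
      = (m : ZMod n) :=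
  paillier_decryption_correct_general n lam m hn hco
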